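/- Let (F,σ) be a constant-stable difference field of characteristic 0, let λ > 1 be an integer, let α ∈ const(F,σ) with α^λ = 1, and let F[y] be the A-extension of order λ with σ(y) = α·y. Then const(F[y],σ) = const(F,σ) if and only if α is a primitive λ-th root of unity in F (i.e., α^λ = 1 and α^m ≠ 1 for every integer m with 1 ≤ m < λ). -/

import Mathlib

/-!
Represent elements of `F[y]` by polynomials of degree `< λ`; on these `σ` acts by the twist
`p(X) ↦ p^σ(αX)`, so a constant has coefficients with `σ(aₙ) αⁿ = aₙ`. Since `αⁿ` is a constant
of order dividing `λ`, `σ^λ` fixes `aₙ`, and constant stability makes `aₙ` a constant; then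
`aₙ (αⁿ - 1) = 0`, which kills `aₙ` for `0 < n < λ` when `α` is primitive. Conversely, if
`αᵐ = 1` with `0 < m < λ`, then `yᵐ` is a non-trivial constant.
-/

open Polynomial

section ConstantStable

variable {R : Type*} [CommRing R]

def IsConstantStable (σ : R ≃+* R) : Prop :=
  ∀ k : ℕ, 1 ≤ k → ∀ c : R, (⇑σ)^[k] c = c → σ c = c

lemma iterate_mul_pow_eq_self {σ : R ≃+* R} {γ a : R} (hγ : σ γ = γ) (ha : σ a * γ = a)
    (n : ℕ) : (⇑σ)^[n] a * γ ^ n = a := by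
  induction n with
  | zero => simp
  | succ n ih =>
    calc (⇑σ)^[n + 1] a * γ ^ (n + 1) = σ ((⇑σ)^[n] a * γ ^ n) * γ := by
          rw [Function.iterate_succ_apply', map_mul, map_pow, hγ, pow_succ, mul_assoc]
      _ = a := by rw [ih, ha]

lemma IsConstantStable.apply_eq_of_apply_mul_eq {σ : R ≃+* R} (hσ : IsConstantStable σ)
    {k : ℕ} (hk : 1 ≤ k) {γ a : R} (hγ : σ γ = γ) (hγk : γ ^ k = 1) (ha : σ a * γ = a) :
    σ a = a :=
  hσ k hk a (by simpa [hγk] using iterate_mul_pow_eq_self hγ ha k)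

end ConstantStable

section Twist

variable {R : Type*} [CommRing R]

noncomputable def twist (σ : R →+* R) (α : R) : R[X] →+* R[X] :=
  (compRingHom (C α * X)).comp (mapRingHom σ)

variable (σ : R →+* R) (α : R)

lemma twist_apply (p : R[X]) : twist σ α p = (p.map σ).comp (C α * X) := rfl

@[simp]
lemma coeff_twist (p : R[X]) (n : ℕ) : (twist σ α p).coeff n = σ (p.coeff n) * α ^ n := by
  simp [twist_apply]

lemma degree_twist_le (p : R[X]) : (twist σ α p).degree ≤ p.degree := by
  rw [degree_le_iff_coeff_zero]
  intro n hn
  simp [coeff_eq_zero_of_degree_lt hn]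

lemma twist_X_pow {m : ℕ} (hα : α ^ m = 1) : twist σ α (X ^ m) = X ^ m := by
  simp [twist_apply, mul_pow, ← C_pow, hα]

lemma mk_twist {I : Ideal R[X]} {σ' : R[X] ⧸ I →+* R[X] ⧸ I}
    (hC : ∀ a, σ' (Ideal.Quotient.mk I (C a)) = Ideal.Quotient.mk I (C (σ a)))
    (hX : σ' (Ideal.Quotient.mk I X) = Ideal.Quotient.mk I (C α * X)) (p : R[X]) :
    σ' (Ideal.Quotient.mk I p) = Ideal.Quotient.mk I (twist σ α p) := by
  have : σ'.comp (Ideal.Quotient.mk I) = (Ideal.Quotient.mk I).comp (twist σ α) :=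
    ringHom_ext (fun a => by simpa [twist_apply] using hC a) (by simpa [twist_apply] using hX)
  exact RingHom.congr_fun this p

end Twist

section QuotientRepresentatives

variable {R : Type*} [CommRing R] [Nontrivial R] {g : R[X]}

lemma exists_degree_lt_mk_eq (hg : g.Monic) (f : R[X] ⧸ Ideal.span {g}) :
    ∃ p : R[X], p.degree < g.degree ∧ Ideal.Quotient.mk _ p = f := by
  obtain ⟨p, rfl⟩ := Ideal.Quotient.mk_surjective f
  exact ⟨p %ₘ g, degree_modByMonic_lt p hg, AdjoinRoot.mk_leftInverse hg (AdjoinRoot.mk g p)⟩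

lemma eq_of_mk_eq_of_degree_lt (hg : g.Monic) {p q : R[X]} (hp : p.degree < g.degree)
    (hq : q.degree < g.degree) (h : Ideal.Quotient.mk (Ideal.span {g}) p = Ideal.Quotient.mk _ q) :
    p = q := by
  rw [Ideal.Quotient.eq, Ideal.mem_span_singleton] at h
  rw [← (modByMonic_eq_self_iff hg).mpr hp, ← (modByMonic_eq_self_iff hg).mpr hq]
  exact modByMonic_eq_of_dvd_sub hg h

end QuotientRepresentatives

lemma IsConstantStable.eq_C_of_twist_eq {K : Type*} [Field K] {σ : K ≃+* K}
    (hσ : IsConstantStable σ) {α : K} {n : ℕ} (hα : IsPrimitiveRoot α n) (hσα : σ α = α)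
    {p : K[X]} (hp : p.degree < n) (htw : twist (σ : K →+* K) α p = p) :
    p = C (p.coeff 0) := by
  ext m
  rcases Nat.eq_zero_or_pos m with rfl | hm
  · simp
  rw [coeff_C, if_neg hm.ne']
  by_cases hmn : m < n
  · have hfix : σ (p.coeff m) * α ^ m = p.coeff m := by
      simpa using congrArg (coeff · m) htw
    have hσp : σ (p.coeff m) = p.coeff m :=
      hσ.apply_eq_of_apply_mul_eq (k := n) (by omega) (by rw [map_pow, hσα])
        (by rw [← pow_mul, mul_comm, pow_mul, hα.pow_eq_one, one_pow]) hfix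
    by_contra hne
    rw [hσp, mul_eq_left₀ hne] at hfix
    exact hα.pow_ne_one_of_pos_of_lt hm.ne' hmn hfix
  · exact coeff_eq_zero_of_degree_lt (hp.trans_le (by exact_mod_cast not_lt.mp hmn))

theorem stmt5_general {F : Type*} [Field F]
    (σ : F ≃+* F)
    (hCS : ∀ k : ℕ, 1 ≤ k → ∀ c : F, (⇑σ)^[k] c = c → σ c = c)
    (lam : ℕ) (hlam : 1 < lam)
    (α : F) (hαconst : σ α = α) (hord : α ^ lam = 1)
    (π : Polynomial F →+*
        (Polynomial F ⧸ Ideal.span {(Polynomial.X : Polynomial F) ^ lam - 1}))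
    (hπ : π = Ideal.Quotient.mk (Ideal.span {(Polynomial.X : Polynomial F) ^ lam - 1}))
    (σ' : (Polynomial F ⧸ Ideal.span {(Polynomial.X : Polynomial F) ^ lam - 1}) ≃+*
        (Polynomial F ⧸ Ideal.span {(Polynomial.X : Polynomial F) ^ lam - 1}))
    (hC : ∀ a : F, σ' (π (Polynomial.C a)) = π (Polynomial.C (σ a)))
    (hY : σ' (π Polynomial.X) = π (Polynomial.C α * Polynomial.X)) :
    (∀ f, σ' f = f → ∃ c : F, σ c = c ∧ f = π (Polynomial.C c)) ↔
      (∀ m : ℕ, 1 ≤ m → m < lam → α ^ m ≠ 1) := by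
  subst hπ
  have hg : (X ^ lam - 1 : F[X]).Monic := by
    simpa using monic_X_pow_sub_C (1 : F) (by omega : lam ≠ 0)
  have hdeg : (X ^ lam - 1 : F[X]).degree = lam := by
    simpa using degree_X_pow_sub_C (by omega : 0 < lam) (1 : F)
  have hσ' := mk_twist (σ : F →+* F) α (σ' := σ'.toRingHom) hC hY
  constructor
  · intro hconst m hm hml hαm
    obtain ⟨c, -, hc⟩ := hconst (Ideal.Quotient.mk _ (X ^ m)) (by
      simpa [twist_X_pow _ _ hαm] using hσ' (X ^ m))
    have hXm : X ^ m = C c := eq_of_mk_eq_of_degree_lt hg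
      (by rw [hdeg, degree_X_pow]; exact_mod_cast hml)
      (by rw [hdeg]; exact degree_C_le.trans_lt (by exact_mod_cast (by omega : 0 < lam))) hc
    have : m = 0 := by simpa using congrArg natDegree hXm
    omega
  · intro hprim f hf
    have hα : IsPrimitiveRoot α lam := .mk_of_lt α (by omega) hord fun m hm => hprim m hm
    obtain ⟨p, hp, rfl⟩ := exists_degree_lt_mk_eq hg f
    have htw : twist (σ : F →+* F) α p = p :=
      eq_of_mk_eq_of_degree_lt hg ((degree_twist_le _ _ p).trans_lt hp) hp (by
        rw [← hσ' p]; exact hf)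
    refine ⟨p.coeff 0, by simpa using congrArg (coeff · 0) htw, ?_⟩
    exact congrArg _ (IsConstantStable.eq_C_of_twist_eq hCS hα hαconst (hdeg ▸ hp) htw)

/-- Let `(F,σ)` be a constant-stable difference field of characteristic 0,
`λ > 1`, `α ∈ const(F,σ)` with `α^λ = 1`, and `F[y] = F[z]/⟨z^λ − 1⟩` the A-extension of
order `λ` with `σ(y) = α·y`. Then `const(F[y],σ) = const(F,σ)` iff `α` is a primitive
`λ`-th root of unity. -/
theorem stmt5 {F : Type*} [Field F] [CharZero F]
    (σ : F ≃+* F)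
    (hCS : ∀ k : ℕ, 1 ≤ k → ∀ c : F, (⇑σ)^[k] c = c → σ c = c)
    (lam : ℕ) (hlam : 1 < lam)
    (α : F) (hαconst : σ α = α) (hord : α ^ lam = 1)
    (π : Polynomial F →+*
        (Polynomial F ⧸ Ideal.span {(Polynomial.X : Polynomial F) ^ lam - 1}))
    (hπ : π = Ideal.Quotient.mk (Ideal.span {(Polynomial.X : Polynomial F) ^ lam - 1}))
    (σ' : (Polynomial F ⧸ Ideal.span {(Polynomial.X : Polynomial F) ^ lam - 1}) ≃+*
        (Polynomial F ⧸ Ideal.span {(Polynomial.X : Polynomial F) ^ lam - 1}))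
    (hC : ∀ a : F, σ' (π (Polynomial.C a)) = π (Polynomial.C (σ a)))
    (hY : σ' (π Polynomial.X) = π (Polynomial.C α * Polynomial.X)) :
    (∀ f, σ' f = f → ∃ c : F, σ c = c ∧ f = π (Polynomial.C c)) ↔
      (∀ m : ℕ, 1 ≤ m → m < lam → α ^ m ≠ 1) :=
  stmt5_general σ hCS lam hlam α hαconst hord π hπ σ' hC hY
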